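/- Let λ ≥ 1 and κ ≥ 1. Let Q ⊆ ℝ^d be a measurable set with 0 < |Q| < ∞, and let f be a smooth function on ℝ^d with ‖f‖_{L²(Q)} > 0 and ∂^α f ∈ L²(Q) for all multiindices α, such that for every m ∈ ℕ, Σ_{|α|=m} (1/α!) ‖∂^α f‖²_{L²(Q)} ≤ 2^{m+1} κ (C_B(m,λ)/m!) ‖f‖²_{L²(Q)}. Then there exists a point x ∈ Q such that for every m ∈ ℕ₀, Σ_{|α|=m} (1/α!) |∂^α f(x)|² ≤ 4^{m+1} κ (C_B(m,λ)/m!) · ‖f‖²_{L²(Q)} / |Q|. -/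

import Mathlib

open MeasureTheory Real Set
open scoped BigOperators ENNReal RealInnerProductSpace

noncomputable section

/-- Physicists' Hermite polynomials `H_n`, via the recursion
`H_0 = 1`, `H_{n+1}(x) = 2 x H_n(x) - H_n'(x)`. -/
def physHermite : ℕ → Polynomial ℝ
  | 0 => 1
  | n + 1 => 2 * Polynomial.X * physHermite n - Polynomial.derivative (physHermite n)

/-- The `L²`-normalized Hermite functions on `ℝ`:
`h_n(t) = (2^n n! √π)^{-1/2} H_n(t) e^{-t²/2}`. -/
def hermiteFun (n : ℕ) (t : ℝ) : ℝ :=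
  ((2 : ℝ) ^ n * (n.factorial : ℝ) * Real.sqrt π) ^ (-(1 : ℝ) / 2) *
    (physHermite n).eval t * Real.exp (-t ^ 2 / 2)

/-- The tensor Hermite function `Φ_α(y) = ∏_j h_{α_j}(y_j)` on `ℝ^{d₁}`. -/
def hermiteProd {d₁ : ℕ} (α : Fin d₁ → ℕ) (y : EuclideanSpace ℝ (Fin d₁)) : ℝ :=
  ∏ j, hermiteFun (α j) (y j)

/-- `g : ℝ^n → ℂ` has Fourier transform (convention `ĝ(ξ) = c ∫ g(x) e^{-i x·ξ} dx`)
supported in the closed Euclidean ball of radius `r`:  `g` is pointwise the inverse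
Fourier integral of a square-integrable function vanishing outside that ball. -/
def Bandlimited {n : ℕ} (r : ℝ) (g : EuclideanSpace ℝ (Fin n) → ℂ) : Prop :=
  ∃ F : EuclideanSpace ℝ (Fin n) → ℂ,
    MemLp F 2 volume ∧
    (∀ ξ, ξ ∉ Metric.closedBall (0 : EuclideanSpace ℝ (Fin n)) r → F ξ = 0) ∧
    ∀ z, g z = ∫ ξ, F ξ * Complex.exp (Complex.I * ((inner ℝ ξ z : ℝ) : ℂ))

/-- The first `d₁` coordinates of a point of `ℝ^{d₁+d₂}`. -/
def fstC (d₁ d₂ : ℕ) (x : EuclideanSpace ℝ (Fin (d₁ + d₂))) : EuclideanSpace ℝ (Fin d₁) :=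
  WithLp.toLp 2 (fun i => x (Fin.castAdd d₂ i))

/-- The last `d₂` coordinates of a point of `ℝ^{d₁+d₂}`. -/
def sndC (d₁ d₂ : ℕ) (x : EuclideanSpace ℝ (Fin (d₁ + d₂))) : EuclideanSpace ℝ (Fin d₂) :=
  WithLp.toLp 2 (fun j => x (Fin.natAdd d₁ j))

/-- Gluing `y ∈ ℝ^{d₁}` and `z ∈ ℝ^{d₂}` to the point `(y,z) ∈ ℝ^{d₁+d₂}`. -/
def glue {d₁ d₂ : ℕ} (y : EuclideanSpace ℝ (Fin d₁)) (z : EuclideanSpace ℝ (Fin d₂)) :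
    EuclideanSpace ℝ (Fin (d₁ + d₂)) :=
  WithLp.toLp 2 (fun i : Fin (d₁ + d₂) => (Fin.addCases (fun i₁ => y i₁) (fun j => z j) i : ℝ))

/-- Degree `|α|` of a multiindex. -/
def mdeg {n : ℕ} (α : Fin n → ℕ) : ℕ := ∑ i, α i

/-- Factorial `α!` of a multiindex. -/
def mfact {n : ℕ} (α : Fin n → ℕ) : ℕ := ∏ i, (α i).factorial

/-- The spectral subspace `E_λ = Ran 1_{(-∞,λ]}(-Δ + |y|²)` on `L²(ℝ^{d₁+d₂})`, realized
concretely as the set of (smooth representatives of) functions of the form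
`f(y,z) = Σ_{2|α|+d₁ ≤ λ} Φ_α(y) g_α(z)` with each `g_α` square-integrable with Fourier
transform supported in the closed ball of radius `(λ - 2|α| - d₁)^{1/2}`. -/
def SpecSubspace (d₁ d₂ : ℕ) (lam : ℝ) (f : EuclideanSpace ℝ (Fin (d₁ + d₂)) → ℂ) : Prop :=
  ∃ (S : Finset (Fin d₁ → ℕ)) (g : (Fin d₁ → ℕ) → EuclideanSpace ℝ (Fin d₂) → ℂ),
    (∀ α ∈ S, 2 * (mdeg α : ℝ) + d₁ ≤ lam) ∧
    (∀ α ∈ S, Bandlimited (Real.sqrt (lam - (2 * (mdeg α : ℝ) + d₁))) (g α)) ∧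
    ∀ x, f x = ∑ α ∈ S, (hermiteProd α (fstC d₁ d₂ x) : ℂ) * g α (sndC d₁ d₂ x)

/-- The open cube `Λ_L(x) = x + (-L/2, L/2)^n`. -/
def cube {n : ℕ} (L : ℝ) (x : EuclideanSpace ℝ (Fin n)) : Set (EuclideanSpace ℝ (Fin n)) :=
  {y | ∀ i, |y i - x i| < L / 2}

/-- First-order partial derivative in coordinate `i`. -/
def pderiv1 {n : ℕ} (i : Fin n) (f : EuclideanSpace ℝ (Fin n) → ℂ) :
    EuclideanSpace ℝ (Fin n) → ℂ :=
  fun x => fderiv ℝ f x (EuclideanSpace.single i 1)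

/-- Iterated partial derivatives along a list of coordinates. -/
def listDeriv {n : ℕ} : List (Fin n) → (EuclideanSpace ℝ (Fin n) → ℂ) →
    EuclideanSpace ℝ (Fin n) → ℂ
  | [], f => f
  | i :: is, f => pderiv1 i (listDeriv is f)

/-- The partial derivative `∂^α` for a multiindex `α`. -/
def mderiv {n : ℕ} (α : Fin n → ℕ) (f : EuclideanSpace ℝ (Fin n) → ℂ) :
    EuclideanSpace ℝ (Fin n) → ℂ :=
  listDeriv ((List.finRange n).flatMap fun i => List.replicate (α i) i) f

/-- `C_B(m,λ) = 2^m ∏_{k=0}^{m-1} (λ + 2k)`. -/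
def CB (m : ℕ) (lam : ℝ) : ℝ := 2 ^ m * ∏ k ∈ Finset.range m, (lam + 2 * k)

/-- `(Q_k)_{k ∈ ι}` is an (at most countable) essential covering of `ℝ^n` by measurable
sets, of multiplicity at most `κ`. -/
def IsEssentialCovering {n : ℕ} {ι : Type*} (Q : ι → Set (EuclideanSpace ℝ (Fin n)))
    (κ : ℝ) : Prop :=
  Countable ι ∧ (∀ k, MeasurableSet (Q k)) ∧
    volume ((Set.univ : Set (EuclideanSpace ℝ (Fin n))) \ ⋃ k, Q k) = 0 ∧
    ∀ x, ∑' k, (Q k).indicator (fun _ => (1 : ℝ≥0∞)) x ≤ ENNReal.ofReal κ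

/-- The set `K_c` of indices whose `Q_k` meets `B(0, Cλ^{1/2}) × ℝ^{d₂}`, where
`C = 32 d₁ (1 + √(log κ))`. -/
def coveringCore (d₁ d₂ : ℕ) {ι : Type*} (Q : ι → Set (EuclideanSpace ℝ (Fin (d₁ + d₂))))
    (κ lam : ℝ) : Set ι :=
  {k | (Q k ∩ {x | fstC d₁ d₂ x ∈
      Metric.ball (0 : EuclideanSpace ℝ (Fin d₁))
        (32 * d₁ * (1 + Real.sqrt (Real.log κ)) * Real.sqrt lam)}).Nonempty}

/-- The set `K_g` of good indices for `f`: those `k` for which the localized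
Bernstein-type inequality holds on `Q_k` for all `m ≥ 1`. -/
def goodIdx (d₁ d₂ : ℕ) {ι : Type*} (Q : ι → Set (EuclideanSpace ℝ (Fin (d₁ + d₂))))
    (κ lam : ℝ) (f : EuclideanSpace ℝ (Fin (d₁ + d₂)) → ℂ) : Set ι :=
  {k | ∀ m : ℕ, 1 ≤ m →
    ∑ α ∈ Finset.Nat.antidiagonalTuple (d₁ + d₂) m,
        (1 / (mfact α : ℝ)) * ∫ x in Q k, ‖mderiv α f x‖ ^ 2 ≤
      2 ^ (m + 1) * κ * (CB m lam / m.factorial) * ∫ x in Q k, ‖f x‖ ^ 2}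

/-- Embedding `ℝ^n ↪ ℂ^n`. -/
def cembed {n : ℕ} (x : EuclideanSpace ℝ (Fin n)) : EuclideanSpace ℂ (Fin n) :=
  WithLp.toLp 2 (fun i => (x i : ℂ))

/-- The set `Q(x) = B(x^{(1)}, ρ(x^{(1)})) × Λ_L(x^{(2)})`. -/
def QSet (d₁ d₂ : ℕ) (ρ : EuclideanSpace ℝ (Fin d₁) → ℝ) (L : ℝ)
    (x : EuclideanSpace ℝ (Fin (d₁ + d₂))) : Set (EuclideanSpace ℝ (Fin (d₁ + d₂))) :=
  {w | fstC d₁ d₂ w ∈ Metric.ball (fstC d₁ d₂ x) (ρ (fstC d₁ d₂ x)) ∧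
    sndC d₁ d₂ w ∈ cube L (sndC d₁ d₂ x)}

/-- The operator `P g = -Σ_{j ∈ J} ∂_j² g + (Σ_{i ∈ I} x_i²) g + #(I∩J) · g`. -/
def Pop {n : ℕ} (I J : Finset (Fin n)) (f : EuclideanSpace ℝ (Fin n) → ℂ) :
    EuclideanSpace ℝ (Fin n) → ℂ :=
  fun x => -(∑ j ∈ J, pderiv1 j (pderiv1 j f) x) +
    ((∑ i ∈ I, (x i) ^ 2 : ℝ) : ℂ) * f x + ((I ∩ J).card : ℂ) * f x

lemma measurable_listDeriv {n : ℕ} : ∀ (l : List (Fin n)) (f : EuclideanSpace ℝ (Fin n) → ℂ),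
    Measurable f → Measurable (listDeriv l f)
  | [], _, hf => hf
  | i :: is, f, _ => by
    show Measurable fun x => fderiv ℝ (listDeriv is f) x (EuclideanSpace.single i 1)
    exact measurable_fderiv_apply_const ℝ (listDeriv is f) _

lemma measurable_mderiv {n : ℕ} (α : Fin n → ℕ) (f : EuclideanSpace ℝ (Fin n) → ℂ)
    (hf : Measurable f) : Measurable (mderiv α f) :=
  measurable_listDeriv _ f hf

lemma mderiv_zero' {n : ℕ} (f : EuclideanSpace ℝ (Fin n) → ℂ) :
    mderiv (0 : Fin n → ℕ) f = f := by
  have h : ((List.finRange n).flatMap fun i => List.replicate ((0 : Fin n → ℕ) i) i) = [] := by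
    simp
  unfold mderiv
  rw [h]
  rfl

lemma mfact_zero' {n : ℕ} : mfact (0 : Fin n → ℕ) = 1 := by simp [mfact]

/-- **Existence of a good Taylor expansion point** (inequality (4.6) /
`eq:pointwiseLocalBernstein`). If `f` is smooth, square-integrable on a set `Q` of
positive finite measure with all derivatives square-integrable on `Q`, and the localized
Bernstein inequality holds on `Q` for all `m ≥ 1`, then there is `x ∈ Q` with
`Σ_{|α|=m} (1/α!) |∂^α f(x)|² ≤ 4^{m+1} κ (C_B(m,λ)/m!) ‖f‖²_{L²(Q)}/|Q|` for all `m ∈ ℕ₀`. -/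
theorem exists_good_taylor_point
    (d : ℕ) (lam κ : ℝ) (hlam : 1 ≤ lam) (hκ : 1 ≤ κ)
    (Q : Set (EuclideanSpace ℝ (Fin d))) (hQmeas : MeasurableSet Q)
    (hQpos : 0 < volume Q) (hQfin : volume Q < ⊤)
    (f : EuclideanSpace ℝ (Fin d) → ℂ) (hsmooth : ContDiff ℝ (⊤ : ℕ∞) f)
    (hfL2 : 0 < ∫ x in Q, ‖f x‖ ^ 2)
    (hderivL2 : ∀ α : Fin d → ℕ, IntegrableOn (fun x => ‖mderiv α f x‖ ^ 2) Q volume)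
    (hgood : ∀ m : ℕ, 1 ≤ m →
      ∑ α ∈ Finset.Nat.antidiagonalTuple d m,
          (1 / (mfact α : ℝ)) * ∫ x in Q, ‖mderiv α f x‖ ^ 2 ≤
        2 ^ (m + 1) * κ * (CB m lam / m.factorial) * ∫ x in Q, ‖f x‖ ^ 2) :
    ∃ x ∈ Q, ∀ m : ℕ,
      ∑ α ∈ Finset.Nat.antidiagonalTuple d m,
          (1 / (mfact α : ℝ)) * ‖mderiv α f x‖ ^ 2 ≤
        4 ^ (m + 1) * κ * (CB m lam / m.factorial) *
          ((∫ x in Q, ‖f x‖ ^ 2) / (volume Q).toReal) := by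
    classical
  set μ := volume.restrict Q with hμdef
  set F := ∫ x in Q, ‖f x‖ ^ 2 with hFdef
  set V := (volume Q).toReal with hVdef
  have hVpos : 0 < V := ENNReal.toReal_pos hQpos.ne' hQfin.ne
  have hκ0 : (0:ℝ) < κ := lt_of_lt_of_le one_pos hκ
  have hCB : ∀ m, 0 < CB m lam := by
    intro m
    unfold CB
    apply mul_pos (by positivity)
    apply Finset.prod_pos
    intro k _
    have : (0:ℝ) ≤ 2 * k := by positivity
    linarith
  set A : ℕ → EuclideanSpace ℝ (Fin d) → ℝ := fun m x =>
    ∑ α ∈ Finset.Nat.antidiagonalTuple d m, (1 / (mfact α : ℝ)) * ‖mderiv α f x‖ ^ 2 with hAdef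
  set B : ℕ → ℝ := fun m => 4 ^ (m+1) * κ * (CB m lam / m.factorial) * (F / V) with hBdef
  have hBpos : ∀ m, 0 < B m := by
    intro m
    have h1 := hCB m
    have h2 : (0:ℝ) < m.factorial := by exact_mod_cast m.factorial_pos
    have h3 : (0:ℝ) < (4:ℝ) ^ (m+1) := by positivity
    exact mul_pos (mul_pos (mul_pos h3 hκ0) (div_pos h1 h2)) (div_pos hfL2 hVpos)
  have hAnonneg : ∀ m x, 0 ≤ A m x := by
    intro m x
    apply Finset.sum_nonneg
    intro α _
    positivity
  have hfmeas : Measurable f := hsmooth.continuous.measurable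
  have hAmeas : ∀ m, Measurable (A m) := by
    intro m
    apply Finset.measurable_sum
    intro α _
    exact (((measurable_mderiv α f hfmeas).norm.pow_const 2)).const_mul _
  have hAint : ∀ m, Integrable (A m) μ := by
    intro m
    apply integrable_finset_sum
    intro α _
    exact ((hderivL2 α).const_mul _)
  have hIA : ∀ m, ∫ x, A m x ∂μ =
      ∑ α ∈ Finset.Nat.antidiagonalTuple d m,
        (1 / (mfact α : ℝ)) * ∫ x in Q, ‖mderiv α f x‖ ^ 2 := by
    intro m
    rw [integral_finset_sum _ (fun α _ => (hderivL2 α).const_mul _)]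
    exact Finset.sum_congr rfl fun α _ => integral_const_mul _ _
  have hI0 : ∫ x, A 0 x ∂μ = F := by
    rw [hIA 0, Finset.Nat.antidiagonalTuple_zero_right, Finset.sum_singleton,
      mfact_zero', mderiv_zero']
    simp only [Nat.cast_one, div_one, one_mul]
    rfl
  have hIbound : ∀ m, 1 ≤ m →
      ∫ x, A m x ∂μ ≤ 2 ^ (m+1) * κ * (CB m lam / m.factorial) * F := by
    intro m hm
    rw [hIA m]
    exact hgood m hm
  set E : ℕ → Set (EuclideanSpace ℝ (Fin d)) := fun m => {x | B m < A m x} with hEdef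
  have hEmeas : ∀ m, MeasurableSet (E m) :=
    fun m => measurableSet_lt measurable_const (hAmeas m)
  have hcheb : ∀ m, μ (E m) ≤ ENNReal.ofReal ((∫ x, A m x ∂μ) / B m) := by
    intro m
    have h1 : μ (E m) ≤ μ {x | ENNReal.ofReal (B m) ≤ ENNReal.ofReal (A m x)} :=
      measure_mono fun x hx => ENNReal.ofReal_le_ofReal (le_of_lt hx)
    have h2 := mul_meas_ge_le_lintegral₀
      ((hAmeas m).ennreal_ofReal.aemeasurable (μ := μ)) (ENNReal.ofReal (B m))
    have h3 : ∫⁻ x, ENNReal.ofReal (A m x) ∂μ = ENNReal.ofReal (∫ x, A m x ∂μ) :=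
      (MeasureTheory.ofReal_integral_eq_lintegral_ofReal (hAint m)
        (Filter.Eventually.of_forall (hAnonneg m))).symm
    rw [ENNReal.ofReal_div_of_pos (hBpos m)]
    rw [ENNReal.le_div_iff_mul_le
      (Or.inl (by simpa using (hBpos m))) (Or.inl ENNReal.ofReal_ne_top)]
    calc μ (E m) * ENNReal.ofReal (B m)
        = ENNReal.ofReal (B m) * μ (E m) := mul_comm _ _
      _ ≤ ENNReal.ofReal (B m) * μ {x | ENNReal.ofReal (B m) ≤ ENNReal.ofReal (A m x)} :=
          mul_le_mul_right h1 _
      _ ≤ ∫⁻ x, ENNReal.ofReal (A m x) ∂μ := h2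
      _ = ENNReal.ofReal (∫ x, A m x ∂μ) := h3
  have hE0 : μ (E 0) ≤ ENNReal.ofReal (V / 4) := by
    refine (hcheb 0).trans (ENNReal.ofReal_le_ofReal ?_)
    rw [hI0]
    have hB0 : B 0 = 4 * κ * (F / V) := by
      simp [hBdef, CB]
    rw [hB0, div_le_iff₀ (by positivity)]
    have hk : V / 4 * (4 * κ * (F / V)) = κ * F := by
      field_simp
    rw [hk]
    nlinarith [hfL2, hκ0]
  have hEs : ∀ m : ℕ, μ (E (m+1)) ≤ ENNReal.ofReal ((1/2) ^ (m+2) * V) := by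
    intro m
    refine (hcheb (m+1)).trans (ENNReal.ofReal_le_ofReal ?_)
    rw [div_le_iff₀ (hBpos (m+1))]
    refine (hIbound (m+1) (by omega)).trans (le_of_eq ?_)
    have hC : CB (m+1) lam / (((m+1).factorial : ℕ) : ℝ) ≠ 0 := by
      have h1 := hCB (m+1)
      have h2 : (0:ℝ) < (((m+1).factorial : ℕ) : ℝ) := by exact_mod_cast (m+1).factorial_pos
      positivity
    have hBval : B (m+1) = 4 ^ (m+2) * κ * (CB (m+1) lam / (m+1).factorial) * (F / V) := rfl
    rw [hBval]
    have h4 : (4:ℝ) ^ (m+1+1) = 2 ^ (m+2) * 2 ^ (m+2) := by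
      rw [show (4:ℝ) = 2 * 2 by norm_num, mul_pow]
    rw [show (m+1+1) = m+2 from rfl] at h4 ⊢
    rw [h4]
    field_simp
    ring_nf
    rw [mul_assoc, ← mul_pow]
    norm_num
  set U : Set (EuclideanSpace ℝ (Fin d)) := ⋃ m, E m with hUdef
  have hUmeas : MeasurableSet U := MeasurableSet.iUnion hEmeas
  have hUlt : μ U < volume Q := by
    have h1 : μ U ≤ ∑' m, μ (E m) := measure_iUnion_le E
    have h2 : ∑' m, μ (E m) = μ (E 0) + ∑' m, μ (E (m+1)) :=
      tsum_eq_zero_add' ENNReal.summable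
    have h3 : ∑' m : ℕ, μ (E (m+1)) ≤ ENNReal.ofReal (V / 2) := by
      calc ∑' m : ℕ, μ (E (m+1)) ≤ ∑' m : ℕ, ENNReal.ofReal ((1/2) ^ (m+2) * V) :=
            ENNReal.tsum_le_tsum hEs
        _ = ENNReal.ofReal (∑' m : ℕ, (1/2) ^ (m+2) * V) := by
            rw [ENNReal.ofReal_tsum_of_nonneg (fun m => by positivity)]
            apply Summable.mul_right
            have hsum : Summable fun m : ℕ => (1/2 : ℝ) ^ m :=
              summable_geometric_of_lt_one (by norm_num) (by norm_num)
            have : (fun m : ℕ => (1/2 : ℝ) ^ (m+2)) = fun m : ℕ => (1/2 : ℝ) ^ m * (1/2)^2 := by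
              ext m; ring
            rw [this]
            exact hsum.mul_right _
        _ = ENNReal.ofReal (V / 2) := by
            congr 1
            have heq : ∑' m : ℕ, (1/2 : ℝ) ^ (m+2) * V
                = (∑' m : ℕ, (1/2 : ℝ) ^ m) * ((1/2)^2 * V) := by
              rw [← tsum_mul_right]
              congr 1
              ext m
              ring
            rw [heq, tsum_geometric_two]
            ring
    have h4 : μ U ≤ ENNReal.ofReal (V / 4) + ENNReal.ofReal (V / 2) := by
      calc μ U ≤ ∑' m, μ (E m) := h1
        _ = μ (E 0) + ∑' m, μ (E (m+1)) := h2
        _ ≤ ENNReal.ofReal (V / 4) + ENNReal.ofReal (V / 2) := add_le_add hE0 h3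
    have h5 : ENNReal.ofReal (V / 4) + ENNReal.ofReal (V / 2) < ENNReal.ofReal V := by
      rw [← ENNReal.ofReal_add (by positivity) (by positivity)]
      exact ENNReal.ofReal_lt_ofReal_iff hVpos |>.2 (by linarith)
    have h6 : ENNReal.ofReal V = volume Q := ENNReal.ofReal_toReal hQfin.ne
    exact lt_of_le_of_lt h4 (h6 ▸ h5)
  have hcomp : 0 < μ Uᶜ := by
    have huniv : μ Set.univ = volume Q := by
      rw [hμdef, Measure.restrict_apply_univ]
    have hfin : μ U ≠ ⊤ := (lt_of_lt_of_le hUlt le_top).ne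
    rw [measure_compl hUmeas hfin, huniv]
    exact tsub_pos_iff_lt.2 hUlt
  have hne : (Uᶜ ∩ Q).Nonempty := by
    rw [hμdef, Measure.restrict_apply hUmeas.compl] at hcomp
    exact nonempty_of_measure_ne_zero hcomp.ne'
  obtain ⟨x, hxU, hxQ⟩ := hne
  refine ⟨x, hxQ, fun m => ?_⟩
  have hxE : x ∉ E m := fun hx => hxU (Set.mem_iUnion.2 ⟨m, hx⟩)
  exact not_lt.1 hxE
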